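/- arXiv:2003.08721 — 3 statements merged into one kernel-verified Lean document; each statement's English description precedes it below -/
import Mathlib

section
/- Proposition 2: the fixed point of the relaxed Bellman operator is a pointwise upper bound on the fixed point of the standard Bellman operator. Suppose S is the complete metric space of bounded measurable functions on X × U with the sup metric, F and F̂ map S into S (all the defining integrals existing), q* ∈ S satisfies q* = Fq*, and q̂ ∈ S satisfies q̂ = F̂q̂. Then q*(x,u) ≤ q̂(x,u) for all (x,u) ∈ X × U. -/
/-!
Put `D = sup (q* - q̂)`. Since `∫ inf ≤ inf ∫`, one application of the two operators gives
`F q* - F̂ q̂ ≤ γ D` pointwise, hence `D ≤ γ D`, and `γ < 1` forces `D ≤ 0`.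
-/

open MeasureTheory

section Bellman

variable {X Ξ U : Type*} [MeasurableSpace Ξ]

noncomputable def bellmanOp (μ : Measure Ξ) (f : X → U → Ξ → X) (ℓ : X × U → ℝ) (γ : ℝ)
    (q : X × U → ℝ) (p : X × U) : ℝ :=
  ℓ p + γ * ∫ ξ, (⨅ w, q (f p.1 p.2 ξ, w)) ∂μ

noncomputable def relaxedBellmanOp (μ : Measure Ξ) (f : X → U → Ξ → X) (ℓ : X × U → ℝ)
    (γ : ℝ) (q : X × U → ℝ) (p : X × U) : ℝ :=
  ℓ p + γ * ⨅ w, ∫ ξ, q (f p.1 p.2 ξ, w) ∂μ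

theorem integral_iInf_le_iInf_integral_add [Nonempty U] {μ : Measure Ξ}
    [IsProbabilityMeasure μ] {g h : Ξ → U → ℝ} {D : ℝ}
    (hg_bdd : ∀ ξ, BddBelow (Set.range (g ξ))) (hg : Integrable (fun ξ => ⨅ w, g ξ w) μ)
    (hh : ∀ w, Integrable (fun ξ => h ξ w) μ) (hgh : ∀ ξ w, g ξ w ≤ h ξ w + D) :
    ∫ ξ, ⨅ w, g ξ w ∂μ ≤ (⨅ w, ∫ ξ, h ξ w ∂μ) + D := by
  rw [← sub_le_iff_le_add]
  refine le_ciInf fun w => sub_le_iff_le_add.2 ?_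
  calc ∫ ξ, ⨅ w, g ξ w ∂μ ≤ ∫ ξ, (h ξ w + D) ∂μ :=
        integral_mono hg ((hh w).add (integrable_const D)) fun ξ =>
          (ciInf_le (hg_bdd ξ) w).trans (hgh ξ w)
    _ = ∫ ξ, h ξ w ∂μ + D := by
        rw [integral_add (hh w) (integrable_const D), integral_const, probReal_univ, one_smul]

theorem bellmanOp_sub_relaxedBellmanOp_le [Nonempty U] {μ : Measure Ξ}
    [IsProbabilityMeasure μ] {f : X → U → Ξ → X} {ℓ : X × U → ℝ} {γ : ℝ} (hγ : 0 ≤ γ)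
    {q q' : X × U → ℝ} {D : ℝ} (hq_bdd : BddBelow (Set.range q))
    (hq : ∀ x u, Integrable (fun ξ => ⨅ w, q (f x u ξ, w)) μ)
    (hq' : ∀ x u w, Integrable (fun ξ => q' (f x u ξ, w)) μ) (hD : ∀ p, q p - q' p ≤ D)
    (p : X × U) : bellmanOp μ f ℓ γ q p - relaxedBellmanOp μ f ℓ γ q' p ≤ γ * D := by
  have hint : ∫ ξ, (⨅ w, q (f p.1 p.2 ξ, w)) ∂μ ≤ (⨅ w, ∫ ξ, q' (f p.1 p.2 ξ, w) ∂μ) + D :=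
    integral_iInf_le_iInf_integral_add
      (fun ξ => hq_bdd.mono (Set.range_comp_subset_range _ q)) (hq p.1 p.2) (hq' p.1 p.2)
      fun ξ w => sub_le_iff_le_add'.1 (hD _)
  rw [bellmanOp, relaxedBellmanOp, add_sub_add_left_eq_sub, ← mul_sub]
  exact mul_le_mul_of_nonneg_left (sub_le_iff_le_add'.2 hint) hγ

end Bellman

theorem le_zero_of_le_mul_iSup {ι : Type*} {g : ι → ℝ} (hg : BddAbove (Set.range g)) {γ : ℝ}
    (hγ : γ < 1) (h : ∀ i, g i ≤ γ * ⨆ j, g j) (i : ι) : g i ≤ 0 := by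
  have : Nonempty ι := ⟨i⟩
  have hsup : ⨆ j, g j ≤ γ * ⨆ j, g j := ciSup_le h
  have hsup_nonpos : ⨆ j, g j ≤ 0 := by nlinarith
  exact (le_ciSup hg i).trans hsup_nonpos

theorem bddAbove_range_of_abs_le {α : Type*} {q : α → ℝ} (hq : ∃ M, ∀ p, |q p| ≤ M) :
    BddAbove (Set.range q) :=
  let ⟨M, hM⟩ := hq
  ⟨M, Set.forall_mem_range.2 fun p => (abs_le.1 (hM p)).2⟩

theorem bddBelow_range_of_abs_le {α : Type*} {q : α → ℝ} (hq : ∃ M, ∀ p, |q p| ≤ M) :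
    BddBelow (Set.range q) :=
  let ⟨M, hM⟩ := hq
  ⟨-M, Set.forall_mem_range.2 fun p => (abs_le.1 (hM p)).1⟩

theorem BddAbove.range_sub {α : Type*} {q q' : α → ℝ} (hq : BddAbove (Set.range q))
    (hq' : BddBelow (Set.range q')) : BddAbove (Set.range fun p => q p - q' p) :=
  let ⟨M, hM⟩ := hq
  let ⟨m, hm⟩ := hq'
  ⟨M - m, Set.forall_mem_range.2 fun p => sub_le_sub (hM ⟨p, rfl⟩) (hm ⟨p, rfl⟩)⟩

theorem fixed_point_relaxed_ge_fixed_point_standard_general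
    {X Ξ U : Type*} [MeasurableSpace X] [MeasurableSpace Ξ] [MeasurableSpace U]
    [Nonempty U]
    (μ : Measure Ξ) [IsProbabilityMeasure μ]
    (f : X → U → Ξ → X) (ℓ : X × U → ℝ) (γ : ℝ) (hγ : γ ∈ Set.Ioo (0 : ℝ) 1)
    -- `F` and `F̂` map the bounded measurable functions into themselves,
    -- all the defining integrals existing
    (hmaps : ∀ q : X × U → ℝ, (∃ M, ∀ p, |q p| ≤ M) → Measurable q →
      (∀ x u w, Integrable (fun ξ => q (f x u ξ, w)) μ) ∧
      (∀ x u, Integrable (fun ξ => ⨅ w, q (f x u ξ, w)) μ) ∧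
      (∃ M, ∀ p : X × U,
        |ℓ p + γ * ∫ ξ, (⨅ w, q (f p.1 p.2 ξ, w)) ∂μ| ≤ M) ∧
      Measurable (fun p : X × U =>
        ℓ p + γ * ∫ ξ, (⨅ w, q (f p.1 p.2 ξ, w)) ∂μ) ∧
      (∃ M, ∀ p : X × U,
        |ℓ p + γ * ⨅ w, ∫ ξ, q (f p.1 p.2 ξ, w) ∂μ| ≤ M) ∧
      Measurable (fun p : X × U =>
        ℓ p + γ * ⨅ w, ∫ ξ, q (f p.1 p.2 ξ, w) ∂μ))
    -- `q*` is a bounded measurable fixed point of `F`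
    (qstar : X × U → ℝ) (hqsb : ∃ M, ∀ p, |qstar p| ≤ M) (hqsm : Measurable qstar)
    (hqsfix : ∀ p : X × U,
      qstar p = ℓ p + γ * ∫ ξ, (⨅ w, qstar (f p.1 p.2 ξ, w)) ∂μ)
    -- `q̂` is a bounded measurable fixed point of `F̂`
    (qhat : X × U → ℝ) (hqhb : ∃ M, ∀ p, |qhat p| ≤ M) (hqhm : Measurable qhat)
    (hqhfix : ∀ p : X × U,
      qhat p = ℓ p + γ * ⨅ w, ∫ ξ, qhat (f p.1 p.2 ξ, w) ∂μ) :
    ∀ p : X × U, qstar p ≤ qhat p := by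
  obtain ⟨hqs_int, hqs_iInf_int, -⟩ := hmaps qstar hqsb hqsm
  obtain ⟨hqh_int, -⟩ := hmaps qhat hqhb hqhm
  have hbdd : BddAbove (Set.range fun p => qstar p - qhat p) :=
    (bddAbove_range_of_abs_le hqsb).range_sub (bddBelow_range_of_abs_le hqhb)
  have hcontract : ∀ p, qstar p - qhat p ≤ γ * ⨆ p', qstar p' - qhat p' := fun p => by
    rw [hqsfix p, hqhfix p]
    exact bellmanOp_sub_relaxedBellmanOp_le hγ.1.le (bddBelow_range_of_abs_le hqsb)
      hqs_iInf_int hqh_int (fun p' => le_ciSup hbdd p') p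
  exact fun p => sub_nonpos.1 (le_zero_of_le_mul_iSup hbdd hγ.2 hcontract p)

/-- Proposition 2: the fixed point of the relaxed Bellman operator `F̂` is a
pointwise upper bound on the fixed point of the standard Bellman operator `F`,
on the space of bounded measurable functions on `X × U`. -/
theorem fixed_point_relaxed_ge_fixed_point_standard
    {X Ξ U : Type*} [MeasurableSpace X] [MeasurableSpace Ξ] [MeasurableSpace U]
    [Nonempty U]
    (μ : Measure Ξ) [IsProbabilityMeasure μ]
    (f : X → U → Ξ → X) (ℓ : X × U → ℝ) (γ : ℝ) (hγ : γ ∈ Set.Ioo (0 : ℝ) 1)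
    (hℓb : ∃ M, ∀ p, |ℓ p| ≤ M) (hℓm : Measurable ℓ)
    -- `F` and `F̂` map the bounded measurable functions into themselves,
    -- all the defining integrals existing
    (hmaps : ∀ q : X × U → ℝ, (∃ M, ∀ p, |q p| ≤ M) → Measurable q →
      (∀ x u w, Integrable (fun ξ => q (f x u ξ, w)) μ) ∧
      (∀ x u, Integrable (fun ξ => ⨅ w, q (f x u ξ, w)) μ) ∧
      (∃ M, ∀ p : X × U,
        |ℓ p + γ * ∫ ξ, (⨅ w, q (f p.1 p.2 ξ, w)) ∂μ| ≤ M) ∧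
      Measurable (fun p : X × U =>
        ℓ p + γ * ∫ ξ, (⨅ w, q (f p.1 p.2 ξ, w)) ∂μ) ∧
      (∃ M, ∀ p : X × U,
        |ℓ p + γ * ⨅ w, ∫ ξ, q (f p.1 p.2 ξ, w) ∂μ| ≤ M) ∧
      Measurable (fun p : X × U =>
        ℓ p + γ * ⨅ w, ∫ ξ, q (f p.1 p.2 ξ, w) ∂μ))
    -- `q*` is a bounded measurable fixed point of `F`
    (qstar : X × U → ℝ) (hqsb : ∃ M, ∀ p, |qstar p| ≤ M) (hqsm : Measurable qstar)
    (hqsfix : ∀ p : X × U,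
      qstar p = ℓ p + γ * ∫ ξ, (⨅ w, qstar (f p.1 p.2 ξ, w)) ∂μ)
    -- `q̂` is a bounded measurable fixed point of `F̂`
    (qhat : X × U → ℝ) (hqhb : ∃ M, ∀ p, |qhat p| ≤ M) (hqhm : Measurable qhat)
    (hqhfix : ∀ p : X × U,
      qhat p = ℓ p + γ * ⨅ w, ∫ ξ, qhat (f p.1 p.2 ξ, w) ∂μ) :
    ∀ p : X × U, qstar p ≤ qhat p :=
  fixed_point_relaxed_ge_fixed_point_standard_general μ f ℓ γ hγ hmaps qstar hqsb hqsm hqsfix qhat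
    hqhb hqhm hqhfix
end

section
/- Linear RLP constraints imply the nonlinear relaxed Bellman inequality: if a bounded function q : X × U → ℝ (with ξ ↦ q(f(x,u,ξ),w) integrable for all (x,u,w)) satisfies q(x,u) ≤ ℓ(x,u) + γ·∫ q(f(x,u,ξ),w) dμ(ξ) for all (x,u,w) ∈ X × U × U, then q(x,u) ≤ F̂q(x,u) for all (x,u) ∈ X × U. Consequently, if F̂ is a monotone γ-contraction on the bounded functions with fixed point q̂, every function feasible for the RLP is a pointwise lower bound on q̂, so q̂ is the unique optimal solution to the RLP. -/
open MeasureTheory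

/-- Linear RLP constraints imply the nonlinear relaxed Bellman inequality
`q ≤ F̂q`; consequently (since `F̂` is a monotone `γ`-contraction with fixed
point `q̂` on the bounded functions) every function feasible for the RLP is a
pointwise lower bound on `q̂`, so `q̂` is the unique optimal solution to the
RLP. -/
theorem RLP_feasible_implies_relaxed_bellman_ineq_and_le_fixed_point
    {X Ξ U : Type*} [MeasurableSpace X] [MeasurableSpace Ξ] [Nonempty U]
    (μ : Measure Ξ) [IsProbabilityMeasure μ]
    (f : X → U → Ξ → X) (ℓ : X → U → ℝ) (γ : ℝ) (hγ : γ ∈ Set.Ioo (0 : ℝ) 1)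
    -- `Fhat` is the relaxed Bellman operator
    (Fhat : (X → U → ℝ) → (X → U → ℝ))
    (hFhat : ∀ (q' : X → U → ℝ) (x : X) (u : U),
      Fhat q' x u = ℓ x u + γ * ⨅ w, ∫ ξ, q' (f x u ξ) w ∂μ)
    -- `Fhat` is monotone on the bounded functions
    (hmono : ∀ q₁ q₂ : X → U → ℝ, (∃ M, ∀ x u, |q₁ x u| ≤ M) →
      (∃ M, ∀ x u, |q₂ x u| ≤ M) → (∀ x u, q₁ x u ≤ q₂ x u) →
      ∀ x u, Fhat q₁ x u ≤ Fhat q₂ x u)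
    -- `Fhat` is a `γ`-contraction in the sup metric on the bounded functions
    (hcontr : ∀ q₁ q₂ : X → U → ℝ, (∃ M, ∀ x u, |q₁ x u| ≤ M) →
      (∃ M, ∀ x u, |q₂ x u| ≤ M) →
      (⨆ p : X × U, |Fhat q₁ p.1 p.2 - Fhat q₂ p.1 p.2|)
        ≤ γ * ⨆ p : X × U, |q₁ p.1 p.2 - q₂ p.1 p.2|)
    (hFhatmaps : ∀ q' : X → U → ℝ, (∃ M, ∀ x u, |q' x u| ≤ M) →
      ∃ M, ∀ x u, |Fhat q' x u| ≤ M)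
    -- `qhat` is a bounded fixed point of `Fhat`
    (qhat : X → U → ℝ) (hqhatb : ∃ M, ∀ x u, |qhat x u| ≤ M)
    (hfix : ∀ x u, Fhat qhat x u = qhat x u)
    -- `q` is bounded, the defining integrals exist, and `q` is RLP-feasible
    (q : X → U → ℝ) (hqb : ∃ M, ∀ x u, |q x u| ≤ M)
    (hi : ∀ x u w, Integrable (fun ξ => q (f x u ξ) w) μ)
    (hfeas : ∀ x u w, q x u ≤ ℓ x u + γ * ∫ ξ, q (f x u ξ) w ∂μ) :
    (∀ x u, q x u ≤ Fhat q x u) ∧ (∀ x u, q x u ≤ qhat x u) := by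

  obtain ⟨hγ0, hγ1⟩ := hγ
  -- Part 1
  have part1 : ∀ x u, q x u ≤ Fhat q x u := by
    intro x u
    rw [hFhat]
    have h1 : (q x u - ℓ x u) / γ ≤ ⨅ w, ∫ ξ, q (f x u ξ) w ∂μ := by
      apply le_ciInf
      intro w
      have := hfeas x u w
      rw [div_le_iff₀ hγ0]
      linarith [mul_comm γ (∫ ξ, q (f x u ξ) w ∂μ)]
    have h2 : γ * ((q x u - ℓ x u) / γ) ≤ γ * ⨅ w, ∫ ξ, q (f x u ξ) w ∂μ :=
      mul_le_mul_of_nonneg_left h1 hγ0.le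
    rw [mul_div_cancel₀ _ (ne_of_gt hγ0)] at h2
    linarith
  refine ⟨part1, ?_⟩
  -- iterates of Fhat starting from q
  set g : ℕ → (X → U → ℝ) := fun n => Fhat^[n] q with hg
  have hg0 : g 0 = q := rfl
  have hgs : ∀ n, g (n + 1) = Fhat (g n) := by
    intro n; simp [hg, Function.iterate_succ_apply']
  have hgb : ∀ n, ∃ M, ∀ x u, |g n x u| ≤ M := by
    intro n; induction n with
    | zero => exact hqb
    | succ n ih => rw [hgs]; exact hFhatmaps _ ih
  have hqleg : ∀ n, ∀ x u, q x u ≤ g n x u := by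
    intro n; induction n with
    | zero => intro x u; exact le_refl _
    | succ n ih =>
      intro x u
      calc q x u ≤ Fhat q x u := part1 x u
        _ ≤ Fhat (g n) x u := hmono q (g n) hqb (hgb n) ih x u
        _ = g (n + 1) x u := by rw [hgs]
  -- sup distance to qhat
  set D : ℕ → ℝ := fun n => ⨆ p : X × U, |g n p.1 p.2 - qhat p.1 p.2| with hD
  have hDbd : ∀ n, BddAbove (Set.range fun p : X × U => |g n p.1 p.2 - qhat p.1 p.2|) := by
    intro n
    obtain ⟨M, hM⟩ := hgb n
    obtain ⟨M', hM'⟩ := hqhatb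
    refine ⟨M + M', ?_⟩
    rintro _ ⟨p, rfl⟩
    calc |g n p.1 p.2 - qhat p.1 p.2| ≤ |g n p.1 p.2| + |qhat p.1 p.2| := abs_sub _ _
      _ ≤ M + M' := add_le_add (hM _ _) (hM' _ _)
  have hDle : ∀ n, D n ≤ γ ^ n * D 0 := by
    intro n; induction n with
    | zero => simp
    | succ n ih =>
      have step : D (n + 1) ≤ γ * D n := by
        have := hcontr (g n) qhat (hgb n) hqhatb
        have heq : (⨆ p : X × U, |Fhat (g n) p.1 p.2 - Fhat qhat p.1 p.2|)
            = D (n + 1) := by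
          simp only [hD, hgs]
          congr 1; funext p; rw [hfix]
        rw [heq] at this
        exact this
      calc D (n + 1) ≤ γ * D n := step
        _ ≤ γ * (γ ^ n * D 0) := mul_le_mul_of_nonneg_left ih hγ0.le
        _ = γ ^ (n + 1) * D 0 := by ring
  intro x u
  have key : ∀ n, q x u - qhat x u ≤ γ ^ n * D 0 := by
    intro n
    calc q x u - qhat x u ≤ g n x u - qhat x u := by linarith [hqleg n x u]
      _ ≤ |g n x u - qhat x u| := le_abs_self _
      _ ≤ D n := le_ciSup (hDbd n) (x, u)
      _ ≤ γ ^ n * D 0 := hDle n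
  have hlim : Filter.Tendsto (fun n => γ ^ n * D 0) Filter.atTop (nhds 0) := by
    have := tendsto_pow_atTop_nhds_zero_of_lt_one hγ0.le hγ1
    simpa using this.mul_const (D 0)
  have := ge_of_tendsto' hlim key
  linarith
end

section
/- Theorem 3, fixed-point verification in the linear-quadratic case: under the LQ setting, suppose P is a symmetric matrix solving the discrete-time algebraic Riccati equation P = q*_xx − q*_xu q*_uu⁻¹ q*_xuᵀ, and suppose the block matrix Q* is positive definite. Define q̂(x,u) = [x;u]ᵀ Q* [x;u] + γ·Tr(q*_xx Σ)/(1−γ). Then q̂ is a fixed point of the relaxed Bellman operator: for all (x,u) ∈ ℝⁿ × ℝᵐ, q̂(x,u) = [x;u]ᵀ L [x;u] + γ · inf_{w ∈ ℝᵐ} ∫ q̂(Ax + Bu + ξ, w) dμ(ξ), and the infimum is attained at w = −q*_uu⁻¹ q*_xuᵀ (Ax + Bu). -/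
open Matrix MeasureTheory

/-!
Completing the square in `w` (the Schur complement of `q*_uu` in `Q*`) and the Riccati equation
give `[y;w]ᵀ Q* [y;w] = yᵀ P y + (w - w₀)ᵀ q*_uu (w - w₀)` with `w₀ = -q*_uu⁻¹ q*_xuᵀ y`, while
centred noise of covariance `Σ` only adds the constant `Tr(q*_xx Σ)` to the expected cost. So the
infimum over `w` is attained at `w₀`, with value `yᵀ P y + Tr(q*_xx Σ) + c` where `c` is the
constant of `q̂`. Since `Q* = L + γ [A B]ᵀ P [A B]` and `c = γ (Tr(q*_xx Σ) + c)`, the Bellman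
equation follows.
-/

lemma transpose_fromCols_mul_mul_fromCols {ι κ ν R : Type*} [CommRing R] [Fintype ν]
    (A : Matrix ν ι R) (B : Matrix ν κ R) (P : Matrix ν ν R) :
    (fromCols A B)ᵀ * P * fromCols A B =
      fromBlocks (Aᵀ * P * A) (Aᵀ * P * B) (Bᵀ * P * A) (Bᵀ * P * B) := by
  rw [transpose_fromCols, fromRows_mul, fromRows_mul_fromCols]

section Blocks

variable {ι κ : Type*} [Fintype ι] [Fintype κ]

lemma sumElim_dotProduct_fromBlocks_mulVec_sumElim {R : Type*} [CommRing R]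
    (Qxx : Matrix ι ι R) (Qxu : Matrix ι κ R) (Quu : Matrix κ κ R) (x : ι → R) (u : κ → R) :
    Sum.elim x u ⬝ᵥ fromBlocks Qxx Qxu Qxuᵀ Quu *ᵥ Sum.elim x u =
      x ⬝ᵥ Qxx *ᵥ x + 2 * (x ⬝ᵥ Qxu *ᵥ u) + u ⬝ᵥ Quu *ᵥ u := by
  rw [fromBlocks_mulVec, sumElim_dotProduct_sumElim, Sum.elim_comp_inl, Sum.elim_comp_inr,
    dotProduct_add, dotProduct_add, dotProduct_mulVec u Qxuᵀ, vecMul_transpose,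
    dotProduct_comm (Qxu *ᵥ u)]
  ring

lemma sumElim_dotProduct_fromBlocks_mulVec_eq_schur [DecidableEq κ]
    (Qxx : Matrix ι ι ℝ) (Qxu : Matrix ι κ ℝ) {Quu : Matrix κ κ ℝ} [Invertible Quu]
    (hQuu : Quu.IsHermitian) (x : ι → ℝ) (u : κ → ℝ) :
    Sum.elim x u ⬝ᵥ fromBlocks Qxx Qxu Qxuᵀ Quu *ᵥ Sum.elim x u =
      (u + (Quu⁻¹ * Qxuᵀ) *ᵥ x) ⬝ᵥ Quu *ᵥ (u + (Quu⁻¹ * Qxuᵀ) *ᵥ x) +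
        x ⬝ᵥ (Qxx - Qxu * Quu⁻¹ * Qxuᵀ) *ᵥ x := by
  simpa [dotProduct_mulVec, add_comm u] using schur_complement_eq₂₂ Qxx Qxu x u hQuu

lemma sumElim_dotProduct_fromBlocks_transpose_mul_mul_mulVec {ν : Type*} [Fintype ν]
    (A : Matrix ν ι ℝ) (B : Matrix ν κ ℝ) {P : Matrix ν ν ℝ} (hP : P.IsSymm)
    (x : ι → ℝ) (u : κ → ℝ) :
    Sum.elim x u ⬝ᵥ fromBlocks (Aᵀ * P * A) (Aᵀ * P * B) (Aᵀ * P * B)ᵀ (Bᵀ * P * B) *ᵥ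
        Sum.elim x u = (A *ᵥ x + B *ᵥ u) ⬝ᵥ P *ᵥ (A *ᵥ x + B *ᵥ u) := by
  rw [transpose_mul, transpose_mul, transpose_transpose, hP.eq, ← Matrix.mul_assoc Bᵀ,
    ← transpose_fromCols_mul_mul_fromCols, ← fromCols_mulVec_sumElim, ← mulVec_mulVec,
    ← mulVec_mulVec, dotProduct_mulVec, vecMul_transpose]

lemma iInf_add_dotProduct_mulVec_add_add {Q : Matrix κ κ ℝ}
    (hQ : Q.PosSemidef) (v : κ → ℝ) (c : ℝ) :
    ⨅ w, ((w + v) ⬝ᵥ Q *ᵥ (w + v) + c) = c := by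
  refine IsGLB.ciInf_eq (IsLeast.isGLB ⟨⟨-v, by simp⟩, Set.forall_mem_range.2 fun w => ?_⟩)
  simpa using hQ.dotProduct_mulVec_nonneg (w + v)

end Blocks

section CenteredNoise

variable {ι : Type*} [Fintype ι] {μ : Measure (ι → ℝ)}

lemma integrable_dotProduct (hint : ∀ i, Integrable (fun ξ : ι → ℝ => ξ i) μ) (a : ι → ℝ) :
    Integrable (fun ξ => a ⬝ᵥ ξ) μ :=
  integrable_finsetSum _ fun i _ => (hint i).const_mul (a i)

lemma integral_dotProduct (hint : ∀ i, Integrable (fun ξ : ι → ℝ => ξ i) μ)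
    (hmean : ∀ i, ∫ ξ, ξ i ∂μ = 0) (a : ι → ℝ) : ∫ ξ, a ⬝ᵥ ξ ∂μ = 0 := by
  simp only [dotProduct]
  rw [integral_finsetSum _ fun i _ => (hint i).const_mul (a i)]
  simp [integral_const_mul, hmean]

lemma dotProduct_mulVec_self_eq_sum (M : Matrix ι ι ℝ) (ξ : ι → ℝ) :
    ξ ⬝ᵥ M *ᵥ ξ = ∑ i, ∑ j, M i j * (ξ i * ξ j) := by
  simp only [dotProduct, mulVec, Finset.mul_sum]
  exact Finset.sum_congr rfl fun i _ => Finset.sum_congr rfl fun j _ => by ring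

lemma integrable_dotProduct_mulVec_self
    (hint : ∀ i j, Integrable (fun ξ : ι → ℝ => ξ i * ξ j) μ) (M : Matrix ι ι ℝ) :
    Integrable (fun ξ => ξ ⬝ᵥ M *ᵥ ξ) μ := by
  simp only [dotProduct_mulVec_self_eq_sum]
  exact integrable_finsetSum _ fun i _ => integrable_finsetSum _ fun j _ =>
    (hint i j).const_mul (M i j)

lemma integral_dotProduct_mulVec_self {S : Matrix ι ι ℝ}
    (hint : ∀ i j, Integrable (fun ξ : ι → ℝ => ξ i * ξ j) μ)
    (hcov : ∀ i j, ∫ ξ, ξ i * ξ j ∂μ = S i j) (M : Matrix ι ι ℝ) :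
    ∫ ξ, ξ ⬝ᵥ M *ᵥ ξ ∂μ = (M * S).trace := by
  have hS : ∀ i j, S j i = S i j := fun i j => by simp only [← hcov, mul_comm]
  simp only [dotProduct_mulVec_self_eq_sum]
  rw [integral_finsetSum _ fun i _ => integrable_finsetSum _ fun j _ =>
    (hint i j).const_mul (M i j)]
  refine Finset.sum_congr rfl fun i _ => ?_
  rw [integral_finsetSum _ fun j _ => (hint i j).const_mul (M i j)]
  simp [integral_const_mul, hcov, mul_apply, hS]

lemma integral_add_dotProduct_add_dotProduct_mulVec_self [IsProbabilityMeasure μ]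
    {S : Matrix ι ι ℝ} (hint₁ : ∀ i, Integrable (fun ξ : ι → ℝ => ξ i) μ)
    (hmean : ∀ i, ∫ ξ, ξ i ∂μ = 0) (hint₂ : ∀ i j, Integrable (fun ξ : ι → ℝ => ξ i * ξ j) μ)
    (hcov : ∀ i j, ∫ ξ, ξ i * ξ j ∂μ = S i j) (c : ℝ) (a : ι → ℝ) (M : Matrix ι ι ℝ) :
    ∫ ξ, (c + a ⬝ᵥ ξ + ξ ⬝ᵥ M *ᵥ ξ) ∂μ = c + (M * S).trace := by
  have hlin : Integrable (fun ξ => c + a ⬝ᵥ ξ) μ :=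
    (integrable_const c).add (integrable_dotProduct hint₁ a)
  rw [integral_add hlin (integrable_dotProduct_mulVec_self hint₂ M),
    integral_add (integrable_const c) (integrable_dotProduct hint₁ a), integral_const,
    integral_dotProduct hint₁ hmean, integral_dotProduct_mulVec_self hint₂ hcov]
  simp

lemma integral_sumElim_add_dotProduct_fromBlocks_mulVec [IsProbabilityMeasure μ]
    {κ : Type*} [Fintype κ] {S : Matrix ι ι ℝ}
    (hint₁ : ∀ i, Integrable (fun ξ : ι → ℝ => ξ i) μ) (hmean : ∀ i, ∫ ξ, ξ i ∂μ = 0)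
    (hint₂ : ∀ i j, Integrable (fun ξ : ι → ℝ => ξ i * ξ j) μ)
    (hcov : ∀ i j, ∫ ξ, ξ i * ξ j ∂μ = S i j)
    (Qxx : Matrix ι ι ℝ) (Qxu : Matrix ι κ ℝ) (Quu : Matrix κ κ ℝ) (c : ℝ)
    (y : ι → ℝ) (w : κ → ℝ) :
    ∫ ξ, (Sum.elim (y + ξ) w ⬝ᵥ fromBlocks Qxx Qxu Qxuᵀ Quu *ᵥ Sum.elim (y + ξ) w + c) ∂μ =
      Sum.elim y w ⬝ᵥ fromBlocks Qxx Qxu Qxuᵀ Quu *ᵥ Sum.elim y w + c + (Qxx * S).trace := by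
  have hexpand : ∀ ξ,
      Sum.elim (y + ξ) w ⬝ᵥ fromBlocks Qxx Qxu Qxuᵀ Quu *ᵥ Sum.elim (y + ξ) w + c =
      (Sum.elim y w ⬝ᵥ fromBlocks Qxx Qxu Qxuᵀ Quu *ᵥ Sum.elim y w + c) +
        (Qxxᵀ *ᵥ y + Qxx *ᵥ y + (2 : ℝ) • Qxu *ᵥ w) ⬝ᵥ ξ + ξ ⬝ᵥ Qxx *ᵥ ξ := by
    intro ξ
    simp only [sumElim_dotProduct_fromBlocks_mulVec_sumElim, mulVec_add, dotProduct_add,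
      add_dotProduct, smul_dotProduct, smul_eq_mul]
    rw [mulVec_transpose, ← dotProduct_mulVec, dotProduct_comm ξ, dotProduct_comm ξ (Qxu *ᵥ w)]
    ring
  simp only [hexpand]
  exact integral_add_dotProduct_add_dotProduct_mulVec_self hint₁ hmean hint₂ hcov _ _ _

end CenteredNoise

theorem lq_fixed_point_verification_general
    {n m : ℕ} (γ : ℝ) (hγ : γ ∈ Set.Ioo (0 : ℝ) 1)
    (μ : Measure (Fin n → ℝ)) [IsProbabilityMeasure μ]
    (Sig : Matrix (Fin n) (Fin n) ℝ)
    (hmean_int : ∀ i, Integrable (fun ξ => ξ i) μ)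
    (hmean : ∀ i, ∫ ξ, ξ i ∂μ = 0)
    (hcov_int : ∀ i j, Integrable (fun ξ => ξ i * ξ j) μ)
    (hcov : ∀ i j, ∫ ξ, ξ i * ξ j ∂μ = Sig i j)
    (A : Matrix (Fin n) (Fin n) ℝ) (B : Matrix (Fin n) (Fin m) ℝ)
    (Lxx : Matrix (Fin n) (Fin n) ℝ) (Lxu : Matrix (Fin n) (Fin m) ℝ)
    (Luu : Matrix (Fin m) (Fin m) ℝ)
    (L : Matrix (Fin n ⊕ Fin m) (Fin n ⊕ Fin m) ℝ)
    (hL : L = Matrix.fromBlocks Lxx Lxu Lxuᵀ Luu)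
    (P : Matrix (Fin n) (Fin n) ℝ) (hPsymm : P.IsSymm)
    (qsxx : Matrix (Fin n) (Fin n) ℝ) (hqsxx : qsxx = Lxx + γ • (Aᵀ * P * A))
    (qsxu : Matrix (Fin n) (Fin m) ℝ) (hqsxu : qsxu = Lxu + γ • (Aᵀ * P * B))
    (qsuu : Matrix (Fin m) (Fin m) ℝ) (hqsuu : qsuu = Luu + γ • (Bᵀ * P * B))
    (Qstar : Matrix (Fin n ⊕ Fin m) (Fin n ⊕ Fin m) ℝ)
    (hQstar : Qstar = Matrix.fromBlocks qsxx qsxu qsxuᵀ qsuu)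
    (hQpd : Qstar.PosDef)
    -- `P` solves the discrete-time algebraic Riccati equation
    (hriccati : P = qsxx - qsxu * qsuu⁻¹ * qsxuᵀ)
    -- the candidate fixed point
    (qhat : (Fin n → ℝ) → (Fin m → ℝ) → ℝ)
    (hqhat : ∀ x u, qhat x u =
      Sum.elim x u ⬝ᵥ Qstar *ᵥ Sum.elim x u + γ * (qsxx * Sig).trace / (1 - γ)) :
    ∀ (x : Fin n → ℝ) (u : Fin m → ℝ),
      qhat x u = Sum.elim x u ⬝ᵥ L *ᵥ Sum.elim x u +
        γ * ⨅ w : Fin m → ℝ, ∫ ξ, qhat (A *ᵥ x + B *ᵥ u + ξ) w ∂μ ∧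
      (⨅ w : Fin m → ℝ, ∫ ξ, qhat (A *ᵥ x + B *ᵥ u + ξ) w ∂μ) =
        ∫ ξ, qhat (A *ᵥ x + B *ᵥ u + ξ)
          (-(qsuu⁻¹ * qsxuᵀ) *ᵥ (A *ᵥ x + B *ᵥ u)) ∂μ := by
  intro x u
  set y := A *ᵥ x + B *ᵥ u
  set c := γ * (qsxx * Sig).trace / (1 - γ)
  have hQuu : qsuu.PosDef := (hQstar ▸ hQpd).submatrix Sum.inr_injective
  let := hQuu.isUnit.invertible
  have hQstar_eq :
      Qstar = L + γ • fromBlocks (Aᵀ * P * A) (Aᵀ * P * B) (Aᵀ * P * B)ᵀ (Bᵀ * P * B) := by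
    rw [hQstar, hL, hqsxx, hqsxu, hqsuu, transpose_add, transpose_smul, fromBlocks_smul,
      fromBlocks_add]
  have hexp : ∀ w, ∫ ξ, qhat (y + ξ) w ∂μ =
      (w + (qsuu⁻¹ * qsxuᵀ) *ᵥ y) ⬝ᵥ qsuu *ᵥ (w + (qsuu⁻¹ * qsxuᵀ) *ᵥ y) +
        (y ⬝ᵥ P *ᵥ y + (qsxx * Sig).trace + c) := by
    intro w
    simp only [hqhat, hQstar]
    rw [integral_sumElim_add_dotProduct_fromBlocks_mulVec hmean_int hmean hcov_int hcov,
      sumElim_dotProduct_fromBlocks_mulVec_eq_schur _ _ hQuu.isHermitian, ← hriccati]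
    ring
  have hinf : ⨅ w, ∫ ξ, qhat (y + ξ) w ∂μ = y ⬝ᵥ P *ᵥ y + (qsxx * Sig).trace + c := by
    simp only [hexp]
    exact iInf_add_dotProduct_mulVec_add_add hQuu.posSemidef _ _
  have hval : ∫ ξ, qhat (y + ξ) (-(qsuu⁻¹ * qsxuᵀ) *ᵥ y) ∂μ =
      y ⬝ᵥ P *ᵥ y + (qsxx * Sig).trace + c := by
    rw [hexp, neg_mulVec, neg_add_cancel, zero_dotProduct, zero_add]
  rw [hinf, hval, hqhat, hQstar_eq, add_mulVec, smul_mulVec, dotProduct_add, dotProduct_smul,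
    sumElim_dotProduct_fromBlocks_transpose_mul_mul_mulVec A B hPsymm]
  have hc : c = γ * ((qsxx * Sig).trace + c) := by
    have : 1 - γ ≠ 0 := by linarith [hγ.2]
    simp only [c]
    field_simp
    ring
  exact ⟨by linear_combination hc, rfl⟩

/-- Theorem 3, fixed-point verification in the linear-quadratic case: with `P`
solving the Riccati equation and `Q*` positive definite, the quadratic function
`q̂(x,u) = [x;u]ᵀ Q* [x;u] + γ Tr(q*_xx Σ)/(1−γ)` is a fixed point of the
relaxed Bellman operator, and the inner infimum is attained at
`w = −q*_uu⁻¹ q*_xuᵀ (Ax + Bu)`. -/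
theorem lq_fixed_point_verification
    {n m : ℕ} (γ : ℝ) (hγ : γ ∈ Set.Ioo (0 : ℝ) 1)
    (μ : Measure (Fin n → ℝ)) [IsProbabilityMeasure μ]
    (Sig : Matrix (Fin n) (Fin n) ℝ)
    (hmean_int : ∀ i, Integrable (fun ξ => ξ i) μ)
    (hmean : ∀ i, ∫ ξ, ξ i ∂μ = 0)
    (hcov_int : ∀ i j, Integrable (fun ξ => ξ i * ξ j) μ)
    (hcov : ∀ i j, ∫ ξ, ξ i * ξ j ∂μ = Sig i j)
    (A : Matrix (Fin n) (Fin n) ℝ) (B : Matrix (Fin n) (Fin m) ℝ)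
    (Lxx : Matrix (Fin n) (Fin n) ℝ) (Lxu : Matrix (Fin n) (Fin m) ℝ)
    (Luu : Matrix (Fin m) (Fin m) ℝ)
    (L : Matrix (Fin n ⊕ Fin m) (Fin n ⊕ Fin m) ℝ)
    (hL : L = Matrix.fromBlocks Lxx Lxu Lxuᵀ Luu) (hLsymm : L.IsSymm)
    (P : Matrix (Fin n) (Fin n) ℝ) (hPsymm : P.IsSymm)
    (qsxx : Matrix (Fin n) (Fin n) ℝ) (hqsxx : qsxx = Lxx + γ • (Aᵀ * P * A))
    (qsxu : Matrix (Fin n) (Fin m) ℝ) (hqsxu : qsxu = Lxu + γ • (Aᵀ * P * B))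
    (qsuu : Matrix (Fin m) (Fin m) ℝ) (hqsuu : qsuu = Luu + γ • (Bᵀ * P * B))
    (Qstar : Matrix (Fin n ⊕ Fin m) (Fin n ⊕ Fin m) ℝ)
    (hQstar : Qstar = Matrix.fromBlocks qsxx qsxu qsxuᵀ qsuu)
    (hQpd : Qstar.PosDef)
    -- `P` solves the discrete-time algebraic Riccati equation
    (hriccati : P = qsxx - qsxu * qsuu⁻¹ * qsxuᵀ)
    -- the candidate fixed point
    (qhat : (Fin n → ℝ) → (Fin m → ℝ) → ℝ)
    (hqhat : ∀ x u, qhat x u =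
      Sum.elim x u ⬝ᵥ Qstar *ᵥ Sum.elim x u + γ * (qsxx * Sig).trace / (1 - γ)) :
    ∀ (x : Fin n → ℝ) (u : Fin m → ℝ),
      qhat x u = Sum.elim x u ⬝ᵥ L *ᵥ Sum.elim x u +
        γ * ⨅ w : Fin m → ℝ, ∫ ξ, qhat (A *ᵥ x + B *ᵥ u + ξ) w ∂μ ∧
      (⨅ w : Fin m → ℝ, ∫ ξ, qhat (A *ᵥ x + B *ᵥ u + ξ) w ∂μ) =
        ∫ ξ, qhat (A *ᵥ x + B *ᵥ u + ξ)
          (-(qsuu⁻¹ * qsxuᵀ) *ᵥ (A *ᵥ x + B *ᵥ u)) ∂μ :=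
  lq_fixed_point_verification_general γ hγ μ Sig hmean_int hmean hcov_int hcov A B Lxx Lxu Luu L hL
    P hPsymm qsxx hqsxx qsxu hqsxu qsuu hqsuu Qstar hQstar hQpd hriccati qhat hqhat
end
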